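/- Let p be a prime, A a finite abelian p-group with |A| > 1, N, r ∈ ℕ, and f_1, …, f_r : A^N → A functions with N > ∑_{i=1}^r fdeg(f_i). Then p divides the cardinality of V(f_1,…,f_r) := {a ∈ A^N : f_1(a) = ⋯ = f_r(a) = 0}. In particular, V(f_1,…,f_r) is not a singleton. -/

import Mathlib

open scoped BigOperators

/-- Action of the integral group ring `ℤ[A]` on functions `A → B`:
`(τ_a * f)(x) = f(x + a)`, extended linearly. -/
noncomputable def groupRingAct {A B : Type*} [AddCommGroup A] [AddCommGroup B]
    (r : AddMonoidAlgebra ℤ A) (f : A → B) : A → B :=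
  fun x => r.coeff.sum fun a z => z • f (x + a)

/-- The augmentation ideal of the group ring `R[A]`. -/
noncomputable def augIdealR (R : Type*) (A : Type*) [CommRing R] [AddCommGroup A] :
    Ideal (AddMonoidAlgebra R A) :=
  Ideal.span {r : AddMonoidAlgebra R A | ∃ a : A, r = AddMonoidAlgebra.single a 1 - 1}

/-- The augmentation ideal of `ℤ[A]`. -/
noncomputable def augIdeal (A : Type*) [AddCommGroup A] : Ideal (AddMonoidAlgebra ℤ A) :=
  augIdealR ℤ A

/-- The functional degree of `f : A → B`: the least `n` with `I^(n+1) * f = 0`,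
where `I` is the augmentation ideal of `ℤ[A]`; `⊤` if there is no such `n`. -/
noncomputable def fdeg {A B : Type*} [AddCommGroup A] [AddCommGroup B] (f : A → B) : ℕ∞ :=
  sInf {N : ℕ∞ | ∃ n : ℕ, N = (n : ℕ∞) ∧
    ∀ r ∈ augIdeal A ^ (n + 1), groupRingAct r f = 0}

/-!
Let `I` be the augmentation ideal of `ℤ[A^N]` and `J` that of `𝔽_p[A]`. As `A` is a `p`-group, `J`
is nilpotent; if `J ^ c` is its last nonzero power, every nonzero element of `J ^ c` is translation
invariant, so the norm element `σ = ∑ a, [a]` lies in `J ^ c`, and the norm element of `A^N`, the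
product of `N` copies of `σ`, lies in `J_{A^N} ^ (N c)`.

If `I ^ (d + 1)` kills `f`, then `τ ∘ f : x ↦ [f x] ∈ 𝔽_p[A]` sends `I ^ k` into `J ^ ⌈k / d⌉`, by
induction on `d` through `[f (x + g)] = [f x] [Δ_g f x]` and a Leibniz rule for the action on
products. The coefficient of `[0]` in `τ ∘ f` is the `𝔽_p`-valued indicator of `f = 0`, which is
therefore killed by `I ^ (c d + 1)`; by the Leibniz rule the indicator of `V` is killed by
`I ^ (c ∑ dᵢ + 1)`, hence by `I ^ (N c)`, hence by the norm element of `A^N`. Evaluated at `0`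
this says `#V = 0` in `𝔽_p`.
-/

open AddMonoidAlgebra

section GroupRingAct

variable {G B : Type*} [AddCommGroup G] [AddCommGroup B]

variable (G B) in
noncomputable def translationRep : ℤ[G] →ₐ[ℤ] Module.End ℤ (G → B) :=
  lift ℤ (Module.End ℤ (G → B)) G
    { toFun := fun a => LinearMap.funLeft ℤ B (· + a.toAdd)
      map_one' := by ext; simp
      map_mul' := fun a b => by ext; simp [add_assoc] }

theorem groupRingAct_eq_translationRep (r : ℤ[G]) (f : G → B) :
    groupRingAct r f = translationRep G B r f := by
  ext x
  simp [groupRingAct, translationRep, lift_apply, Finsupp.sum, Finset.sum_apply]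

@[simp]
theorem groupRingAct_single (a : G) (z : ℤ) (f : G → B) (x : G) :
    groupRingAct (single a z) f x = z • f (x + a) := by
  simp [groupRingAct]

@[simp]
theorem groupRingAct_one (f : G → B) : groupRingAct 1 f = f := by
  simp [groupRingAct_eq_translationRep]

@[simp]
theorem groupRingAct_zero (f : G → B) : groupRingAct 0 f = 0 := by
  simp [groupRingAct_eq_translationRep]

theorem groupRingAct_add (r s : ℤ[G]) (f : G → B) :
    groupRingAct (r + s) f = groupRingAct r f + groupRingAct s f := by
  simp [groupRingAct_eq_translationRep]

theorem groupRingAct_sub (r s : ℤ[G]) (f : G → B) :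
    groupRingAct (r - s) f = groupRingAct r f - groupRingAct s f := by
  simp [groupRingAct_eq_translationRep]

theorem groupRingAct_sum {ι : Type*} (s : Finset ι) (r : ι → ℤ[G]) (f : G → B) :
    groupRingAct (∑ i ∈ s, r i) f = ∑ i ∈ s, groupRingAct (r i) f := by
  simp [groupRingAct_eq_translationRep]

theorem groupRingAct_mul (r s : ℤ[G]) (f : G → B) :
    groupRingAct (r * s) f = groupRingAct r (groupRingAct s f) := by
  simp [groupRingAct_eq_translationRep]

theorem groupRingAct_sub_right (r : ℤ[G]) (f g : G → B) :
    groupRingAct r (f - g) = groupRingAct r f - groupRingAct r g := by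
  simp [groupRingAct_eq_translationRep]

theorem groupRingAct_mem {M : AddSubgroup B} {f : G → B} (hf : ∀ x, f x ∈ M) (r : ℤ[G])
    (x : G) : groupRingAct r f x ∈ M :=
  AddSubmonoidClass.finsuppSum_mem _ _ _ fun _ _ => M.zsmul_mem (hf _) _

end GroupRingAct

section ActIdeal

variable {G B : Type*} [AddCommGroup G] [AddCommGroup B]

noncomputable def actIdeal (M : AddSubgroup B) (f : G → B) : Ideal ℤ[G] where
  carrier := {r | ∀ x, groupRingAct r f x ∈ M}
  add_mem' hr hs x := by rw [groupRingAct_add]; exact M.add_mem (hr x) (hs x)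
  zero_mem' x := by simp
  smul_mem' c r hr x := by rw [smul_eq_mul, groupRingAct_mul]; exact groupRingAct_mem hr c x

theorem mem_actIdeal {M : AddSubgroup B} {f : G → B} {r : ℤ[G]} :
    r ∈ actIdeal M f ↔ ∀ x, groupRingAct r f x ∈ M := Iff.rfl

theorem actIdeal_eq_top {M : AddSubgroup B} {f : G → B} (hf : ∀ x, f x ∈ M) :
    actIdeal M f = ⊤ :=
  eq_top_iff.mpr fun r _ => groupRingAct_mem hf r

noncomputable def annihIdeal (f : G → B) : Ideal ℤ[G] := actIdeal ⊥ f

theorem mem_annihIdeal {f : G → B} {r : ℤ[G]} :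
    r ∈ annihIdeal f ↔ groupRingAct r f = 0 := by
  simp [annihIdeal, mem_actIdeal, funext_iff]

theorem annihIdeal_le_actIdeal (M : AddSubgroup B) (f : G → B) : annihIdeal f ≤ actIdeal M f :=
  fun _ hr x => by rw [mem_annihIdeal.mp hr]; exact M.zero_mem

theorem exists_augIdeal_pow_le_annihIdeal {f : G → B} (hf : fdeg f ≠ ⊤) :
    ∃ d : ℕ, fdeg f = d ∧ augIdeal G ^ (d + 1) ≤ annihIdeal f := by
  let S : Set ℕ∞ :=
    {N | ∃ n : ℕ, N = n ∧ ∀ r ∈ augIdeal G ^ (n + 1), groupRingAct r f = 0}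
  have hfS : fdeg f = sInf S := rfl
  obtain ⟨d, hd, hann⟩ : sInf S ∈ S :=
    csInf_mem (Set.nonempty_iff_ne_empty.mpr fun h => hf (by rw [hfS, h, sInf_empty]))
  exact ⟨d, hfS.trans hd, fun r hr => mem_annihIdeal.mpr (hann r hr)⟩

end ActIdeal

section AugIdeal

variable {G : Type*} [AddCommGroup G]

noncomputable def delta (g : G) : ℤ[G] := single g 1 - 1

theorem delta_mem_augIdeal (g : G) : delta g ∈ augIdeal G := Ideal.subset_span ⟨g, rfl⟩

theorem groupRingAct_delta {B : Type*} [AddCommGroup B] (g : G) (f : G → B) (x : G) :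
    groupRingAct (delta g) f x = f (x + g) - f x := by
  simp [delta, groupRingAct_sub]

theorem augIdeal_eq_span_range_delta : augIdeal G = Ideal.span (Set.range delta) := by
  simp only [augIdeal, augIdealR, delta, Set.range, eq_comm (a := single _ _ - _)]

theorem augIdeal_pow_le_iff {k : ℕ} {K : Ideal ℤ[G]} :
    augIdeal G ^ k ≤ K ↔ ∀ g : Fin k → G, ∏ i, delta (g i) ∈ K := by
  rw [augIdeal_eq_span_range_delta, Ideal.span, Submodule.span_pow, ← Ideal.span, Ideal.span_le]
  constructor
  · intro h g
    exact h (Set.mem_pow.mpr ⟨fun i => ⟨_, g i, rfl⟩, List.prod_ofFn⟩)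
  · intro h a ha
    obtain ⟨t, rfl⟩ := Set.mem_pow.mp ha
    choose g hg using fun i => (t i).2
    simpa [List.prod_ofFn, hg] using h g

theorem augIdeal_le_annihIdeal_const {B : Type*} [AddCommGroup B] (b : B) :
    augIdeal G ≤ annihIdeal (fun _ : G => b) := by
  rw [augIdeal_eq_span_range_delta, Ideal.span_le]
  rintro _ ⟨g, rfl⟩
  rw [SetLike.mem_coe, mem_annihIdeal]
  ext x
  simp [groupRingAct_delta]

end AugIdeal

section Functoriality

variable {G H B C : Type*} [AddCommGroup G] [AddCommGroup H] [AddCommGroup B] [AddCommGroup C]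

theorem map_augIdealR_le (R : Type*) [CommRing R] (φ : G →+ H) :
    (augIdealR R G).map (mapDomainRingHom R φ) ≤ augIdealR R H := by
  rw [augIdealR, Ideal.map_span, Ideal.span_le]
  rintro _ ⟨_, ⟨a, rfl⟩, rfl⟩
  exact Ideal.subset_span ⟨φ a, by simp [map_sub]⟩

theorem mapDomainRingHom_mem_augIdealR_pow {R : Type*} [CommRing R] (φ : G →+ H) {k : ℕ}
    {r : R[G]} (hr : r ∈ augIdealR R G ^ k) :
    mapDomainRingHom R φ r ∈ augIdealR R H ^ k := by
  have := Ideal.mem_map_of_mem (mapDomainRingHom R φ) hr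
  rw [Ideal.map_pow] at this
  exact Ideal.pow_right_mono (map_augIdealR_le R φ) k this

theorem groupRingAct_comp (φ : G →+ H) (r : ℤ[G]) (w : H → B) (x : G) :
    groupRingAct r (w ∘ φ) x = groupRingAct (mapDomainRingHom ℤ φ r) w (φ x) := by
  induction r using induction_linear with
  | zero => simp
  | add r s hr hs => simp only [map_add, groupRingAct_add, Pi.add_apply, hr, hs]
  | single a z => simp

theorem groupRingAct_map (ψ : B →+ C) (r : ℤ[G]) (f : G → B) (x : G) :
    groupRingAct r (ψ ∘ f) x = ψ (groupRingAct r f x) := by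
  simp [groupRingAct, map_finsuppSum]

end Functoriality

section Leibniz

variable {G R : Type*} [AddCommGroup G] [CommRing R]

theorem groupRingAct_inl_mul_inr (s t : ℤ[G]) (u v : G → R) (y : G × G) :
    groupRingAct (mapDomainRingHom ℤ (AddMonoidHom.inl G G) s *
        mapDomainRingHom ℤ (AddMonoidHom.inr G G) t) (fun z => u z.1 * v z.2) y =
      groupRingAct s u y.1 * groupRingAct t v y.2 := by
  induction s using induction_linear with
  | zero => simp
  | add s s' hs hs' => simp only [map_add, add_mul, groupRingAct_add, Pi.add_apply, hs, hs']
  | single a z =>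
    induction t using induction_linear with
    | zero => simp
    | add t t' ht ht' => simp only [map_add, mul_add, groupRingAct_add, Pi.add_apply, ht, ht']
    | single b w =>
      simp only [mapDomainRingHom_apply, mapDomain_single, single_mul_single, groupRingAct_single]
      simp [mul_mul_mul_comm]

theorem augIdeal_prod_le :
    augIdeal (G × G) ≤ (augIdeal G).map (mapDomainRingHom ℤ (AddMonoidHom.inl G G)) ⊔
      (augIdeal G).map (mapDomainRingHom ℤ (AddMonoidHom.inr G G)) := by
  rw [augIdeal, augIdealR, Ideal.span_le]
  rintro _ ⟨⟨g, h⟩, rfl⟩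
  have hsplit : single (g, h) 1 - 1 =
      mapDomainRingHom ℤ (AddMonoidHom.inl G G) (delta g) * single (0, h) 1 +
        mapDomainRingHom ℤ (AddMonoidHom.inr G G) (delta h) := by
    simp [delta, map_sub, sub_mul, single_mul_single]
  rw [SetLike.mem_coe, hsplit]
  exact Ideal.add_mem _
    (Ideal.mem_sup_left (Ideal.mul_mem_right _ _ (Ideal.mem_map_of_mem _ (delta_mem_augIdeal g))))
    (Ideal.mem_sup_right (Ideal.mem_map_of_mem _ (delta_mem_augIdeal h)))

/-- Pulled back to `G × G`, where `I = I₁ + I₂`, the product `u * v` becomes `u z.1 * v z.2`,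
and each term `I₁ ^ i * I₂ ^ (k - i)` of `(I₁ + I₂) ^ k` acts factorwise. -/
theorem augIdeal_pow_le_actIdeal_mul (J : Ideal R) {u v : G → R} {k E : ℕ}
    {e₁ e₂ : ℕ → ℕ}
    (hu : ∀ i ≤ k, augIdeal G ^ i ≤ actIdeal (J ^ e₁ i).toAddSubgroup u)
    (hv : ∀ i ≤ k, augIdeal G ^ i ≤ actIdeal (J ^ e₂ i).toAddSubgroup v)
    (hE : ∀ i ≤ k, E ≤ e₁ i + e₂ (k - i)) :
    augIdeal G ^ k ≤ actIdeal (J ^ E).toAddSubgroup (u * v) := by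
  let diag : G →+ G × G := (AddMonoidHom.id G).prod (AddMonoidHom.id G)
  have hprod : augIdeal (G × G) ^ k ≤
      actIdeal (J ^ E).toAddSubgroup (fun z : G × G => u z.1 * v z.2) := by
    refine (Ideal.pow_right_mono augIdeal_prod_le k).trans ?_
    rw [← Ideal.add_eq_sup, add_pow, Ideal.sum_eq_sup]
    refine Finset.sup_le fun i hi => Ideal.mul_le_left.trans ?_
    have hik : i ≤ k := Nat.lt_succ_iff.mp (Finset.mem_range.mp hi)
    rw [← Ideal.map_pow, ← Ideal.map_pow, Ideal.map, Ideal.map, Ideal.span_mul_span',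
      Ideal.span_le]
    rintro _ ⟨_, ⟨s, hs, rfl⟩, _, ⟨t, ht, rfl⟩, rfl⟩ y
    rw [groupRingAct_inl_mul_inr]
    refine Ideal.pow_le_pow_right (hE i hik) ?_
    rw [pow_add]
    exact Ideal.mul_mem_mul (hu i hik hs y.1) (hv _ (Nat.sub_le k i) ht y.2)
  intro r hr x
  have := hprod (mapDomainRingHom_mem_augIdealR_pow diag hr) (diag x)
  rwa [← groupRingAct_comp] at this

end Leibniz

section Product

variable {G R : Type*} [AddCommGroup G] [CommRing R]

theorem augIdeal_pow_le_annihIdeal_mul {u v : G → R} {a b : ℕ}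
    (hu : augIdeal G ^ (a + 1) ≤ annihIdeal u) (hv : augIdeal G ^ (b + 1) ≤ annihIdeal v) :
    augIdeal G ^ (a + b + 1) ≤ annihIdeal (u * v) := by
  -- with `J = ⊥` the Leibniz rule says that degrees add
  have hbot : ∀ (w : G → R) (c : ℕ), augIdeal G ^ (c + 1) ≤ annihIdeal w → ∀ i,
      augIdeal G ^ i ≤
        actIdeal ((⊥ : Ideal R) ^ (if i ≤ c then 0 else 1)).toAddSubgroup w := by
    intro w c hw i
    split_ifs with hic
    · simp [actIdeal_eq_top]
    · simpa [annihIdeal] using (Ideal.pow_le_pow_right (by omega)).trans hw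
  simpa [annihIdeal] using augIdeal_pow_le_actIdeal_mul ⊥ (E := 1) (fun i _ => hbot u a hu i)
    (fun i _ => hbot v b hv i) (fun i _ => by split_ifs <;> omega)

theorem augIdeal_pow_le_annihIdeal_prod {ι : Type*} (s : Finset ι) {u : ι → G → R}
    {d : ι → ℕ} (hu : ∀ i ∈ s, augIdeal G ^ (d i + 1) ≤ annihIdeal (u i)) :
    augIdeal G ^ (∑ i ∈ s, d i + 1) ≤ annihIdeal (∏ i ∈ s, u i) := by
  classical
  induction s using Finset.induction_on with
  | empty => simpa [Pi.one_def] using augIdeal_le_annihIdeal_const (1 : R)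
  | insert a s ha ih =>
    rw [Finset.sum_insert ha, Finset.prod_insert ha]
    exact augIdeal_pow_le_annihIdeal_mul (hu a (Finset.mem_insert_self a s))
      (ih fun i hi => hu i (Finset.mem_insert_of_mem hi))

end Product

theorem Nat.succ_ceilDiv_succ_le {m i k : ℕ} (hm : 1 ≤ m) (hik : i ≤ k) :
    (k + 1) ⌈/⌉ (m + 1) ≤ i ⌈/⌉ (m + 1) + max 1 ((k - i) ⌈/⌉ m) := by
  obtain ⟨j, rfl⟩ := Nat.exists_eq_add_of_le hik
  rw [Nat.add_sub_cancel_left, ceilDiv_le_iff_le_mul (by omega)]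
  have hi : i ≤ (m + 1) * (i ⌈/⌉ (m + 1)) := le_smul_ceilDiv (a := m + 1) (b := i) (by omega)
  have hj : j ≤ m * max 1 (j ⌈/⌉ m) :=
    (le_smul_ceilDiv (a := m) (b := j) (by omega)).trans
      (Nat.mul_le_mul_left m (le_max_right _ _))
  have h1 : 1 ≤ max 1 (j ⌈/⌉ m) := le_max_left _ _
  nlinarith

noncomputable def tau (R : Type*) [CommRing R] {G B : Type*} (f : G → B) : G → R[B] :=
  fun x => single (f x) 1

theorem tau_sub_one_mem {R G B : Type*} [CommRing R] [AddCommGroup B] (f : G → B) (x : G) :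
    tau R f x - 1 ∈ augIdealR R B :=
  Ideal.subset_span ⟨f x, rfl⟩

section Composition

variable {G B : Type*} [AddCommGroup G] [AddCommGroup B] {R : Type*} [CommRing R]

theorem groupRingAct_delta_tau (g : G) (f : G → B) :
    groupRingAct (delta g) (tau R f) = tau R f * (tau R (groupRingAct (delta g) f) - 1) := by
  ext x : 1
  simp [groupRingAct_delta, tau, mul_sub, single_mul_single]

theorem augIdeal_pow_le_annihIdeal_delta {m : ℕ} {f : G → B}
    (hf : augIdeal G ^ (m + 1) ≤ annihIdeal f) (g : G) :
    augIdeal G ^ m ≤ annihIdeal (groupRingAct (delta g) f) := fun r hr => by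
  rw [mem_annihIdeal, ← groupRingAct_mul]
  exact mem_annihIdeal.mp
    (hf (pow_succ (augIdeal G) m ▸ Ideal.mul_mem_mul hr (delta_mem_augIdeal g)))

theorem augIdeal_le_annihIdeal_comp {C : Type*} [AddCommGroup C] {f : G → B}
    (hf : augIdeal G ≤ annihIdeal f) (F : B → C) : augIdeal G ≤ annihIdeal (F ∘ f) := by
  have hconst : F ∘ f = fun _ => F (f 0) := by
    ext x
    have hx := congrFun (mem_annihIdeal.mp (hf (delta_mem_augIdeal x))) 0
    simp only [groupRingAct_delta, zero_add, Pi.zero_apply, sub_eq_zero] at hx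
    simp [hx]
  rw [hconst]
  exact augIdeal_le_annihIdeal_const _

/-- The factor `τ ∘ Δ_g f - 1` takes values in `J`, and for `j > 0` the elements of `I ^ j` kill
the constant `1`: hence the exponent `max 1 (ε j)`. -/
theorem augIdeal_pow_succ_le_actIdeal_tau {f : G → B} {k E : ℕ} {e ε : ℕ → ℕ}
    (hε : ε 0 = 0)
    (hτ : ∀ i ≤ k, augIdeal G ^ i ≤ actIdeal (augIdealR R B ^ e i).toAddSubgroup (tau R f))
    (hδ : ∀ g, ∀ j, 0 < j → j ≤ k → augIdeal G ^ j ≤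
      actIdeal (augIdealR R B ^ ε j).toAddSubgroup (tau R (groupRingAct (delta g) f)))
    (hE : ∀ i ≤ k, E ≤ e i + max 1 (ε (k - i))) :
    augIdeal G ^ (k + 1) ≤ actIdeal (augIdealR R B ^ E).toAddSubgroup (tau R f) := by
  rw [augIdeal_pow_le_iff]
  intro g
  have htail : ∏ i : Fin k, delta (g i.succ) ∈ augIdeal G ^ k :=
    augIdeal_pow_le_iff.mp le_rfl _
  rw [Fin.prod_univ_succ, mul_comm, mem_actIdeal, groupRingAct_mul, groupRingAct_delta_tau]
  refine augIdeal_pow_le_actIdeal_mul _ (e₂ := fun j => max 1 (ε j)) hτ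
    (fun j hj r hr x => ?_) hE htail
  rcases le_total (ε j) 1 with hle | hle
  · rw [max_eq_left hle, pow_one]
    exact groupRingAct_mem (M := (augIdealR R B).toAddSubgroup) (tau_sub_one_mem _) r x
  · have hj0 : 0 < j := Nat.pos_of_ne_zero fun h => by simp [h, hε] at hle
    have hone : groupRingAct r (1 : G → R[B]) = 0 :=
      mem_annihIdeal.mp (augIdeal_le_annihIdeal_const 1 (Ideal.pow_le_self hj0.ne' hr))
    rw [max_eq_right hle, groupRingAct_sub_right, hone, sub_zero]
    exact hδ (g 0) j hj0 hj hr x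

/-- For `m = 1` the difference quotients `Δ_g f` are constant, so `τ ∘ Δ_g f` is killed by `I`;
for `m > 1` they have degree `m - 1`. -/
theorem augIdeal_pow_le_actIdeal_tau {m : ℕ} (hm : 1 ≤ m) {f : G → B}
    (hf : augIdeal G ^ (m + 1) ≤ annihIdeal f) (k : ℕ) :
    augIdeal G ^ k ≤ actIdeal (augIdealR R B ^ (k ⌈/⌉ m)).toAddSubgroup (tau R f) := by
  induction m, hm using Nat.le_induction generalizing f k with
  | base =>
    induction k using Nat.strong_induction_on with
    | _ k ihk =>
      rcases k with _ | k
      · simp [actIdeal_eq_top]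
      refine augIdeal_pow_succ_le_actIdeal_tau (ε := fun j => if j = 0 then 0 else k + 1) rfl
        (fun i hi => ihk i (by omega)) (fun g j hj _ => ?_) (fun i hi => ?_)
      · have hδ : augIdeal G ≤ annihIdeal (groupRingAct (delta g) f) := by
          simpa using augIdeal_pow_le_annihIdeal_delta (m := 1) hf g
        exact (Ideal.pow_le_self hj.ne').trans
          ((augIdeal_le_annihIdeal_comp hδ fun b => single b (1 : R)).trans
            (annihIdeal_le_actIdeal _ _))
      · simp only [ceilDiv_one]
        split_ifs <;> omega
  | succ m hm ih =>
    induction k using Nat.strong_induction_on with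
    | _ k ihk =>
      rcases k with _ | k
      · simp [actIdeal_eq_top]
      exact augIdeal_pow_succ_le_actIdeal_tau (ε := (· ⌈/⌉ m)) (zero_ceilDiv m)
        (fun i hi => ihk i (by omega)) (fun g j _ _ => ih (augIdeal_pow_le_annihIdeal_delta hf g) j)
        (fun i hi => Nat.succ_ceilDiv_succ_le hm hi)

end Composition

theorem augIdeal_pow_le_annihIdeal_indicator {G B R : Type*} [AddCommGroup G] [AddCommGroup B]
    [DecidableEq B] [CommRing R] {c d : ℕ} (hc : augIdealR R B ^ (c + 1) = ⊥) {f : G → B}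
    (hf : augIdeal G ^ (d + 1) ≤ annihIdeal f) :
    augIdeal G ^ (c * d + 1) ≤ annihIdeal (fun x => if f x = 0 then (1 : R) else 0) := by
  rcases Nat.eq_zero_or_pos d with rfl | hd
  · rw [zero_add, pow_one] at hf
    rw [mul_zero, zero_add, pow_one]
    exact augIdeal_le_annihIdeal_comp hf fun b => if b = 0 then (1 : R) else 0
  -- the indicator of `f = 0` is the coefficient of `[0]` in `τ ∘ f`
  let coeffZero : R[B] →+ R := (Finsupp.applyAddHom 0).comp coeffAddEquiv.toAddMonoidHom
  have hind : (fun x => if f x = 0 then (1 : R) else 0) = coeffZero ∘ tau R f := by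
    ext x
    simp [coeffZero, tau, Finsupp.single_apply]
  have hceil : c + 1 ≤ (c * d + 1) ⌈/⌉ d := Nat.lt_of_not_le fun h => by
    rw [ceilDiv_le_iff_le_mul hd] at h
    nlinarith
  intro r hr
  rw [mem_annihIdeal, hind]
  ext x
  have hmem := Ideal.pow_le_pow_right hceil (augIdeal_pow_le_actIdeal_tau (R := R) hd hf _ hr x)
  rw [hc, Submodule.mem_bot] at hmem
  rw [groupRingAct_map, hmem, map_zero, Pi.zero_apply]

section NormElement

variable (R : Type*) [CommRing R] (A : Type*) [Fintype A]

noncomputable def normElement : R[A] := ∑ a : A, single a 1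

variable {R A}

theorem coeff_normElement (b : A) : (normElement R A).coeff b = 1 := by
  classical
  simp [normElement, coeff_sum, Finsupp.single_apply]

variable [AddCommGroup A]

theorem groupRingAct_normElement_apply_zero {B : Type*} [AddCommGroup B] (h : A → B) :
    groupRingAct (normElement ℤ A) h 0 = ∑ a, h a := by
  simp [normElement, groupRingAct_sum, Finset.sum_apply]

theorem mapRingHom_normElement {S : Type*} [CommRing S] (φ : R →+* S) :
    mapRingHom A φ (normElement R A) = normElement S A := by
  simp [normElement]

theorem prod_mapDomainRingHom_single_normElement (ι : Type*) [Fintype ι] [DecidableEq ι] :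
    ∏ j : ι, mapDomainRingHom R (AddMonoidHom.single (fun _ : ι => A) j) (normElement R A) =
      normElement R (ι → A) := by
  simp only [normElement, map_sum, mapDomainRingHom_apply, mapDomain_single,
    AddMonoidHom.single_apply, Finset.prod_univ_sum, prod_single, Finset.prod_const_one,
    Fintype.piFinset_univ]
  exact Finset.sum_congr rfl fun g _ => by rw [Finset.univ_sum_single]

/-- A nonzero element of the last nonzero power of `J` is translation invariant, hence a multiple
of the norm element. -/
theorem normElement_mem_augIdealR_pow {K : Type*} [Field K] {c : ℕ}
    (hc : augIdealR K A ^ (c + 1) = ⊥) (hne : augIdealR K A ^ c ≠ ⊥) :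
    normElement K A ∈ augIdealR K A ^ c := by
  obtain ⟨u, hu, hu0⟩ := (Submodule.ne_bot_iff _).mp hne
  have hinv : ∀ a, single a 1 * u = u := fun a => by
    have h : u * (single a 1 - 1) ∈ augIdealR K A ^ (c + 1) :=
      pow_succ (augIdealR K A) c ▸ Ideal.mul_mem_mul hu (Ideal.subset_span ⟨a, rfl⟩)
    rwa [hc, Submodule.mem_bot, mul_sub, mul_one, sub_eq_zero, mul_comm] at h
  have hcoeff : ∀ b, u.coeff b = u.coeff 0 := fun b => by
    nth_rewrite 1 [← hinv b]
    rw [coeff_single_mul_apply, one_mul, neg_add_cancel]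
  have hu' : u = u.coeff 0 • normElement K A := by
    ext b
    rw [coeff_smul_apply, coeff_normElement, hcoeff b, smul_eq_mul, mul_one]
  have hc0 : u.coeff 0 ≠ 0 := fun h => hu0 (by rw [hu', h, zero_smul])
  rw [← inv_smul_smul₀ hc0 (normElement K A), ← hu']
  exact Submodule.smul_of_tower_mem _ _ hu

end NormElement

theorem normElement_pi_mem_augIdealR_pow {R A : Type*} [CommRing R] [AddCommGroup A]
    [Fintype A] (ι : Type*) [Fintype ι] [DecidableEq ι] {c : ℕ}
    (hσ : normElement R A ∈ augIdealR R A ^ c) :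
    normElement R (ι → A) ∈ augIdealR R (ι → A) ^ (Fintype.card ι * c) := by
  have hprod := Ideal.prod_mem_prod (s := Finset.univ) (I := fun _ => augIdealR R (ι → A) ^ c)
    fun j _ => mapDomainRingHom_mem_augIdealR_pow (AddMonoidHom.single (fun _ : ι => A) j) hσ
  rwa [prod_mapDomainRingHom_single_normElement, Finset.prod_const, Finset.card_univ, ← pow_mul,
    mul_comm] at hprod

section PGroup

variable {p : ℕ} [Fact p.Prime] {A : Type*} [AddCommGroup A]

theorem isNilpotent_augIdealR {R : Type*} [CommRing R] [CharP R p] [Finite A]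
    (hA : ∀ x : A, ∃ n : ℕ, p ^ n • x = 0) : IsNilpotent (augIdealR R A) := by
  have : CharP R[A] p := charP_of_injective_algebraMap' R p
  have hfg : (augIdealR R A).FG :=
    Submodule.fg_span ((Set.finite_range fun a : A => (single a 1 - 1 : R[A])).subset
      (by rintro _ ⟨a, rfl⟩; exact ⟨a, rfl⟩))
  refine hfg.isNilpotent_iff_le_nilradical.mpr (Ideal.span_le.mpr ?_)
  rintro _ ⟨a, rfl⟩
  obtain ⟨n, hn⟩ := hA a
  exact mem_nilradical.mpr ⟨p ^ n, by
    rw [sub_pow_char_pow, single_pow, one_pow, hn, one_pow, ← one_def, sub_self]⟩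

theorem exists_augIdealR_pow_eq_bot_normElement_mem [Fintype A]
    (hA : ∀ x : A, ∃ n : ℕ, p ^ n • x = 0) (hcard : 1 < Fintype.card A) :
    ∃ c, 1 ≤ c ∧ augIdealR (ZMod p) A ^ (c + 1) = ⊥ ∧
      normElement (ZMod p) A ∈ augIdealR (ZMod p) A ^ c := by
  classical
  have hnil : ∃ n, augIdealR (ZMod p) A ^ n = ⊥ := isNilpotent_augIdealR hA
  obtain ⟨a, ha⟩ := Fintype.exists_ne_of_one_lt_card hcard 0
  have hne : augIdealR (ZMod p) A ≠ ⊥ := fun h => ha <| by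
    have hmem : single a (1 : ZMod p) - 1 ∈ augIdealR (ZMod p) A := Ideal.subset_span ⟨a, rfl⟩
    rwa [h, Submodule.mem_bot, sub_eq_zero, one_def, single_left_inj one_ne_zero] at hmem
  have h0 : Nat.find hnil ≠ 0 := fun h => by simpa [h] using Nat.find_spec hnil
  have h1 : Nat.find hnil ≠ 1 := fun h => hne (by simpa [h] using Nat.find_spec hnil)
  have hsucc : Nat.find hnil - 1 + 1 = Nat.find hnil := by omega
  refine ⟨Nat.find hnil - 1, by omega, hsucc ▸ Nat.find_spec hnil, ?_⟩
  exact normElement_mem_augIdealR_pow (hsucc ▸ Nat.find_spec hnil) (Nat.find_min hnil (by omega))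

end PGroup

section Reduction

variable {p : ℕ} {G : Type*} [AddCommGroup G]

theorem groupRingAct_eq_zero_of_mapRingHom_eq_zero {S : Type*} [CommRing S] {r : ℤ[G]}
    (hr : mapRingHom G (Int.castRingHom S) r = 0) (h : G → S) :
    groupRingAct r h = 0 := by
  have hcoeff : ∀ a, ((r.coeff a : ℤ) : S) = 0 := fun a => by
    simpa using congrArg (fun s => s.coeff a) hr
  ext x
  simp [groupRingAct, Finsupp.sum, zsmul_eq_mul, hcoeff]

theorem map_augIdealR_mapRingHom {R S : Type*} [CommRing R] [CommRing S] (φ : R →+* S) :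
    (augIdealR R G).map (mapRingHom G φ) = augIdealR S G := by
  rw [augIdealR, augIdealR, Ideal.map_span]
  congr 1
  ext s
  simp [map_sub, eq_comm]

theorem groupRingAct_eq_zero_of_mapRingHom_mem {k : ℕ} {h : G → ZMod p}
    (hh : augIdeal G ^ k ≤ annihIdeal h) {r : ℤ[G]}
    (hr : mapRingHom G (Int.castRingHom (ZMod p)) r ∈ augIdealR (ZMod p) G ^ k) :
    groupRingAct r h = 0 := by
  rw [← map_augIdealR_mapRingHom (Int.castRingHom (ZMod p)), ← Ideal.map_pow,
    Ideal.mem_map_iff_of_surjective _ (map_surjective _ (ZMod.intCast_surjective (n := p)))] at hr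
  obtain ⟨s, hs, hsr⟩ := hr
  have hdiff := groupRingAct_eq_zero_of_mapRingHom_eq_zero (r := r - s)
    (by rw [map_sub, hsr, sub_self]) h
  rwa [groupRingAct_sub, mem_annihIdeal.mp (hh hs), sub_zero] at hdiff

end Reduction

theorem sum_eq_zero_of_augIdeal_pow_le_annihIdeal {p : ℕ} {G : Type*} [AddCommGroup G]
    [Fintype G] {k : ℕ} {h : G → ZMod p} (hh : augIdeal G ^ k ≤ annihIdeal h)
    (hσ : normElement (ZMod p) G ∈ augIdealR (ZMod p) G ^ k) :
    ∑ x, h x = 0 := by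
  rw [← groupRingAct_normElement_apply_zero, groupRingAct_eq_zero_of_mapRingHom_mem hh
    (by rwa [mapRingHom_normElement]), Pi.zero_apply]

theorem warning_first_group_general {p : ℕ} (hp : p.Prime) {A : Type*} [AddCommGroup A]
    [Fintype A] (hA : ∀ x : A, ∃ n : ℕ, p ^ n • x = 0) (hcard : 1 < Fintype.card A)
    {N r : ℕ} (f : Fin r → ((Fin N → A) → A))
    (hdeg : (N : ℕ∞) > ∑ i : Fin r, fdeg (f i)) :
    p ∣ Nat.card {a : Fin N → A // ∀ i : Fin r, f i a = 0} ∧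
      ¬ ∃ a₀ : Fin N → A, ∀ a : Fin N → A, (∀ i : Fin r, f i a = 0) ↔ a = a₀ := by
  classical
  have : Fact p.Prime := ⟨hp⟩
  have hfin : ∀ i, fdeg (f i) ≠ ⊤ := fun i htop => by
    have hlt := (Finset.single_le_sum (fun _ _ => zero_le) (Finset.mem_univ i)).trans_lt hdeg
    simp [htop] at hlt
  choose d hd hann using fun i => exists_augIdeal_pow_le_annihIdeal (hfin i)
  have hsum : ∑ i, d i < N := by
    exact_mod_cast (by simpa [hd] using hdeg : ∑ i, (d i : ℕ∞) < N)
  obtain ⟨c, hc1, hc, hσ⟩ := exists_augIdealR_pow_eq_bot_normElement_mem hA hcard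
  have hdegc : ∑ i, c * d i + 1 ≤ N * c := by
    rw [← Finset.mul_sum]
    nlinarith
  have hV := (Ideal.pow_le_pow_right hdegc).trans (augIdeal_pow_le_annihIdeal_prod Finset.univ
    fun i _ => augIdeal_pow_le_annihIdeal_indicator (R := ZMod p) hc (hann i))
  have hcount := sum_eq_zero_of_augIdeal_pow_le_annihIdeal hV
    (by simpa using normElement_pi_mem_augIdealR_pow (Fin N) hσ)
  simp only [Finset.prod_apply, Finset.prod_boole, Finset.mem_univ, true_implies,
    Finset.sum_boole] at hcount
  have hdvd : p ∣ Nat.card {a : Fin N → A // ∀ i : Fin r, f i a = 0} := by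
    rwa [Nat.card_eq_fintype_card, Fintype.card_subtype, ← ZMod.natCast_eq_zero_iff]
  refine ⟨hdvd, fun ⟨a₀, ha₀⟩ => hp.not_dvd_one ?_⟩
  rwa [Nat.card_eq_one_iff_exists.mpr ⟨⟨a₀, (ha₀ a₀).mpr rfl⟩,
    fun a => Subtype.ext ((ha₀ a).mp a.2)⟩] at hdvd

theorem warning_first_group {p : ℕ} (hp : p.Prime) {A : Type*} [AddCommGroup A]
    [Fintype A] (hA : ∀ x : A, ∃ n : ℕ, p ^ n • x = 0) (hcard : 1 < Fintype.card A)
    {N r : ℕ} (hN : 0 < N) (hr : 0 < r) (f : Fin r → ((Fin N → A) → A))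
    (hdeg : (N : ℕ∞) > ∑ i : Fin r, fdeg (f i)) :
    p ∣ Nat.card {a : Fin N → A // ∀ i : Fin r, f i a = 0} ∧
      ¬ ∃ a₀ : Fin N → A, ∀ a : Fin N → A, (∀ i : Fin r, f i a = 0) ↔ a = a₀ :=
  warning_first_group_general hp hA hcard f hdeg
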